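/- arXiv:1612.04189 — 9 statements merged into one kernel-verified Lean document; each statement's English description precedes it below -/
import Mathlib

section
/- The class of all surjective weakly distributive lattice homomorphisms satisfies pullback transfer: if f : P → K and h : L → K are lattice homomorphisms with h surjective and weakly distributive, and Q = {(x,y) ∈ P × L : f(x) = h(y)} is the pullback with projection h̄ : Q → P given by h̄(x,y) = x, then h̄ is surjective and weakly distributive. -/
/-- A join-homomorphism `h : L → K` is weakly distributive if whenever
`h y ≤ x₀ ⊔ x₁` there are `y₀, y₁` with `y ≤ y₀ ⊔ y₁` and `h yᵢ ≤ xᵢ`. -/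
def WeaklyDistributive {L K : Type*} [Lattice L] [Lattice K] (h : L → K) : Prop :=
  ∀ y : L, ∀ x₀ x₁ : K, h y ≤ x₀ ⊔ x₁ →
    ∃ y₀ y₁ : L, y ≤ y₀ ⊔ y₁ ∧ h y₀ ≤ x₀ ∧ h y₁ ≤ x₁

/-- Pullback transfer for surjective weakly distributive lattice homomorphisms:
given lattice homomorphisms `f : P → K` and `h : L → K` with `h` surjective and
weakly distributive, the projection `h̄ : Q → P` of the pullback
`Q = {(x,y) ∈ P × L : f x = h y}` (a sublattice of `P × L`) is surjective and
weakly distributive. -/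
theorem pullback_transfer_of_weaklyDistributive
    {P K L : Type*} [Lattice P] [Lattice K] [Lattice L]
    (f : LatticeHom P K) (h : LatticeHom L K)
    (hsurj : Function.Surjective h) (hwd : WeaklyDistributive h) :
    -- `h̄` is surjective:
    (∀ x : P, ∃ q : P × L, f q.1 = h q.2 ∧ q.1 = x) ∧
    -- `h̄` is weakly distributive (sups of members of `Q` computed in `P × L`
    -- agree with sups in the sublattice `Q`):
    (∀ q : P × L, f q.1 = h q.2 → ∀ x₀ x₁ : P, q.1 ≤ x₀ ⊔ x₁ →
      ∃ q₀ q₁ : P × L, f q₀.1 = h q₀.2 ∧ f q₁.1 = h q₁.2 ∧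
        q ≤ q₀ ⊔ q₁ ∧ q₀.1 ≤ x₀ ∧ q₁.1 ≤ x₁) := by
  constructor
  · intro x
    obtain ⟨y, hy⟩ := hsurj (f x)
    exact ⟨(x, y), hy.symm, rfl⟩
  · rintro ⟨p, l⟩ hq x₀ x₁ hle
    have hl : h l ≤ f x₀ ⊔ f x₁ := by
      rw [← hq, ← map_sup f]
      exact OrderHomClass.mono f hle
    obtain ⟨y₀, y₁, hy, h0, h1⟩ := hwd l (f x₀) (f x₁) hl
    obtain ⟨z₀, hz₀⟩ := hsurj (f x₀)
    obtain ⟨z₁, hz₁⟩ := hsurj (f x₁)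
    refine ⟨(x₀, z₀ ⊔ y₀), (x₁, z₁ ⊔ y₁), ?_, ?_, ⟨hle, ?_⟩, le_refl _, le_refl _⟩
    · simp [map_sup h, hz₀, sup_eq_left.mpr h0]
    · simp [map_sup h, hz₁, sup_eq_left.mpr h1]
    · exact le_trans hy (sup_le_sup le_sup_right le_sup_right)
end

section
/- Let h : L → K be a surjective weakly distributive lattice homomorphism between lattices. Then the map φ : K → Id L defined by φ(x) = {t ∈ L : h(t) ≤ x} is a lattice embedding of K into the ideal lattice of L, and for each x ∈ K, x is the largest element of h[φ(x)]. -/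
/-- `I` is an ideal of the lattice `L`: nonempty, downward closed, and closed under joins. -/
def IsLatticeIdeal {L : Type*} [Lattice L] (I : Set L) : Prop :=
  I.Nonempty ∧ (∀ a b : L, a ≤ b → b ∈ I → a ∈ I) ∧ (∀ a b : L, a ∈ I → b ∈ I → a ⊔ b ∈ I)

/-- The join of two ideals of a lattice, as sets. -/
def idealJoin {L : Type*} [Lattice L] (A B : Set L) : Set L :=
  {x | ∃ a ∈ A, ∃ b ∈ B, x ≤ a ⊔ b}

/-- If `h : L → K` is a surjective weakly distributive lattice homomorphism, then
`φ x = {t ∈ L : h t ≤ x}` defines a lattice embedding `K ↪ Id L`, and `x` is the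
largest element of `h[φ x]` for each `x`. -/
theorem embedding_into_ideal_lattice_of_weaklyDistributive
    {L K : Type*} [Lattice L] [Lattice K] (h : LatticeHom L K)
    (hsurj : Function.Surjective h) (hwd : WeaklyDistributive h) :
    ∀ φ : K → Set L, (∀ x : K, φ x = {t : L | h t ≤ x}) →
      -- each `φ x` is an ideal of `L`
      (∀ x : K, IsLatticeIdeal (φ x)) ∧
      -- `φ` preserves meets and joins (computed in `Id L`)
      (∀ x y : K, φ (x ⊓ y) = φ x ∩ φ y) ∧
      (∀ x y : K, φ (x ⊔ y) = idealJoin (φ x) (φ y)) ∧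
      -- `φ` is an order embedding (in particular injective)
      (∀ x y : K, x ≤ y ↔ φ x ⊆ φ y) ∧
      -- `x` is the largest element of `h[φ x]`
      (∀ x : K, x ∈ h '' (φ x) ∧ ∀ z ∈ h '' (φ x), z ≤ x) := by

  intro φ hφ
  have mem : ∀ x (t : L), t ∈ φ x ↔ h t ≤ x := by
    intro x t; rw [hφ x]; rfl
  refine ⟨?_, ?_, ?_, ?_, ?_⟩
  · intro x
    obtain ⟨t, ht⟩ := hsurj x
    refine ⟨⟨t, (mem x t).2 ht.le⟩, ?_, ?_⟩
    · intro a b hab hb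
      exact (mem x a).2 (le_trans (OrderHomClass.mono h hab) ((mem x b).1 hb))
    · intro a b ha hb
      rw [mem] at *
      rw [map_sup]
      exact sup_le ha hb
  · intro x y
    ext t
    simp only [mem, Set.mem_inter_iff, le_inf_iff]
  · intro x y
    ext t
    simp only [mem, idealJoin, Set.mem_setOf_eq]
    constructor
    · intro ht
      obtain ⟨y₀, y₁, hle, h0, h1⟩ := hwd t x y ht
      exact ⟨y₀, h0, y₁, h1, hle⟩
    · rintro ⟨a, ha, b, hb, hle⟩
      calc h t ≤ h (a ⊔ b) := OrderHomClass.mono h hle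
        _ = h a ⊔ h b := map_sup h a b
        _ ≤ x ⊔ y := sup_le_sup ha hb
  · intro x y
    constructor
    · intro hxy t ht
      exact (mem y t).2 (le_trans ((mem x t).1 ht) hxy)
    · intro hsub
      obtain ⟨t, ht⟩ := hsurj x
      exact ht ▸ (mem y t).1 (hsub ((mem x t).2 ht.le))
  · intro x
    obtain ⟨t, ht⟩ := hsurj x
    constructor
    · exact ⟨t, (mem x t).2 ht.le, ht⟩
    · rintro z ⟨a, ha, rfl⟩
      exact (mem x a).1 ha
end

section
/- Let C be a convex sublattice of a lattice L and let Λ be a chain (linearly ordered set). Then the set M of all antitone maps x : Λ → L whose range meets C is a sublattice of the product lattice L^Λ (i.e., M is nonempty and closed under pointwise join and meet). -/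
/-- Let `C` be a (nonempty) convex sublattice of a lattice `L` and `Λ` a (nonempty)
chain. Then the set `M` of all antitone maps `Λ → L` whose range meets `C` is a
sublattice of the product lattice `L^Λ`: it is nonempty and closed under the
pointwise join and meet. -/
theorem antitone_maps_meeting_convex_sublattice
    {L Λ : Type*} [Lattice L] [LinearOrder Λ] [Nonempty Λ]
    (C : Set L) (hCne : C.Nonempty)
    (hCsup : ∀ a ∈ C, ∀ b ∈ C, a ⊔ b ∈ C)
    (hCinf : ∀ a ∈ C, ∀ b ∈ C, a ⊓ b ∈ C)
    (hCconv : ∀ a ∈ C, ∀ c ∈ C, ∀ b : L, a ≤ b → b ≤ c → b ∈ C) :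
    letI M : Set (Λ → L) := {x | Antitone x ∧ ∃ ξ : Λ, x ξ ∈ C}
    M.Nonempty ∧ (∀ x ∈ M, ∀ y ∈ M, x ⊔ y ∈ M ∧ x ⊓ y ∈ M) := by
  obtain ⟨c, hc⟩ := hCne
  obtain ⟨ξ0⟩ := ‹Nonempty Λ›
  refine ⟨⟨fun _ => c, antitone_const, ξ0, hc⟩, ?_⟩
  rintro x ⟨hx, ξ, hxξ⟩ y ⟨hy, η, hyη⟩
  constructor
  · refine ⟨hx.sup hy, ?_⟩
    rcases le_total ξ η with h | h
    · exact ⟨η, hCconv _ hyη _ (hCsup _ hxξ _ hyη) _ le_sup_right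
        (sup_le_sup_right (hx h) _)⟩
    · exact ⟨ξ, hCconv _ hxξ _ (hCsup _ hxξ _ hyη) _ le_sup_left
        (sup_le_sup_left (hy h) _)⟩
  · refine ⟨hx.inf hy, ?_⟩
    rcases le_total ξ η with h | h
    · exact ⟨ξ, hCconv _ (hCinf _ hxξ _ hyη) _ hxξ _
        (inf_le_inf_left _ (hy h)) inf_le_left⟩
    · exact ⟨η, hCconv _ (hCinf _ hxξ _ hyη) _ hyη _
        (inf_le_inf_right _ (hx h)) inf_le_right⟩
end

section
/- In a modular lattice M with least element o, suppose elements a₁, …, a_m ≥ o are given, set a₍₍<k₎₎ = a₁ ∨ ⋯ ∨ a₍k₋₁₎ (with empty join o), and suppose for each k, b_k is a relative complement of a_k ∧ a₍₍<k₎₎ in the interval [o, a_k] (i.e., b_k ∨ (a_k ∧ a₍₍<k₎₎) = a_k and b_k ∧ (a_k ∧ a₍₍<k₎₎) = o). Then the sequence (b₁, …, b_m) is independent over o; in particular b_k ∧ (b₁ ∨ ⋯ ∨ b₍k₋₁₎) = o for every k ∈ [1, m]. -/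
/-- The join `a₁ ⊔ ⋯ ⊔ a₍k₋₁₎` with the empty join taken to be `o`. -/
def joinBelow {M : Type*} [Lattice M] (o : M) (a : ℕ → M) (k : ℕ) : M :=
  (Finset.Ico 1 k).fold (· ⊔ ·) o a

lemma fold_sup_mono {M : Type*} [Lattice M] (o : M) (a b : ℕ → M)
    (s : Finset ℕ) (h : ∀ i ∈ s, b i ≤ a i) :
    (s.fold (· ⊔ ·) o b : M) ≤ (s.fold (· ⊔ ·) o a : M) := by
  classical
  induction s using Finset.induction_on with
  | empty => simp
  | @insert i s hi ih =>
    rw [Finset.fold_insert hi, Finset.fold_insert hi]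
    exact sup_le_sup (h i (Finset.mem_insert_self i s))
      (ih fun j hj => h j (Finset.mem_insert_of_mem hj))

/-- In a modular lattice `M` with least element `o`, if `o ≤ aₖ` for each
`k ∈ [1, m]` and each `bₖ` is a relative complement of `aₖ ⊓ (a₁ ⊔ ⋯ ⊔ a₍k₋₁₎)`
in the interval `[o, aₖ]`, then the sequence `(b₁, …, b_m)` is independent over
`o`; i.e. `bₖ ⊓ (b₁ ⊔ ⋯ ⊔ b₍k₋₁₎) = o` for every `k ∈ [1, m]`. -/
theorem relative_complements_independent
    {M : Type*} [Lattice M] [IsModularLattice M]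
    (o : M) (holeast : ∀ x : M, o ≤ x)
    (m : ℕ) (a b : ℕ → M)
    (ho : ∀ k, 1 ≤ k → k ≤ m → o ≤ a k)
    (hbo : ∀ k, 1 ≤ k → k ≤ m → o ≤ b k)
    (hble : ∀ k, 1 ≤ k → k ≤ m → b k ≤ a k)
    (hsup : ∀ k, 1 ≤ k → k ≤ m → b k ⊔ (a k ⊓ joinBelow o a k) = a k)
    (hinf : ∀ k, 1 ≤ k → k ≤ m → b k ⊓ (a k ⊓ joinBelow o a k) = o) :
    ∀ k, 1 ≤ k → k ≤ m → b k ⊓ joinBelow o b k = o := by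
  intro k hk1 hkm
  have hmono : joinBelow o b k ≤ joinBelow o a k := by
    apply fold_sup_mono
    intro i hi
    rw [Finset.mem_Ico] at hi
    exact hble i hi.1 (le_trans (Nat.le_of_lt_succ (Nat.lt_succ_of_lt hi.2)) hkm)
  refine le_antisymm ?_ (le_inf (hbo k hk1 hkm) (holeast _))
  calc b k ⊓ joinBelow o b k ≤ b k ⊓ (a k ⊓ joinBelow o a k) :=
        le_inf inf_le_left (le_inf (le_trans inf_le_left (hble k hk1 hkm))
          (le_trans inf_le_right hmono))
    _ = o := hinf k hk1 hkm
end

section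
/- Let E be the vector space over a field k with basis {aₙ : n < ω} ∪ {bₙ : n < ω}, let Aₙ = span(a₀,…,aₙ), Bₙ = span(b₀,…,bₙ), C₀ = span(a₀+b₀, a₁+b₁+a₀, a₂+b₂+a₁, …), D₀ = span(a₀+b₀, a₁+b₁, a₂+b₂, …), C₍n+1₎ = C₀ + Aₙ + Bₙ, D₍n+1₎ = D₀ + Aₙ + Bₙ. Then Cₙ ∩ Dₙ = span(a₀, b₀, …, a₍n₋₁₎, b₍n₋₁₎, aₙ + bₙ) for each n < ω; consequently Cₙ ∩ Dₙ ⊆ Aₙ + Bₙ ⊆ C₍n+1₎ ∩ D₍n+1₎. -/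
/-- The vector space over `k` with basis `{aₙ} ∪ {bₙ}` (`n < ω`). -/
abbrev VecE (k : Type*) [Field k] := (ℕ ⊕ ℕ) →₀ k

variable (k : Type*) [Field k]

/-- The basis vector `aₙ`. -/
noncomputable def aV (n : ℕ) : VecE k := Finsupp.single (Sum.inl n) 1

/-- The basis vector `bₙ`. -/
noncomputable def bV (n : ℕ) : VecE k := Finsupp.single (Sum.inr n) 1

/-- `Aₙ = span(a₀, …, aₙ)`. -/
noncomputable def Asub (n : ℕ) : Submodule k (VecE k) := Submodule.span k {v | ∃ i ≤ n, v = aV k i}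

/-- `Bₙ = span(b₀, …, bₙ)`. -/
noncomputable def Bsub (n : ℕ) : Submodule k (VecE k) := Submodule.span k {v | ∃ i ≤ n, v = bV k i}

/-- `C₀ = span(a₀+b₀, a₁+b₁+a₀, a₂+b₂+a₁, …)`. -/
noncomputable def Czero : Submodule k (VecE k) :=
  Submodule.span k ({aV k 0 + bV k 0} ∪ {v | ∃ i, v = aV k (i+1) + bV k (i+1) + aV k i})

/-- `D₀ = span(a₀+b₀, a₁+b₁, a₂+b₂, …)`. -/
noncomputable def Dzero : Submodule k (VecE k) := Submodule.span k {v | ∃ i, v = aV k i + bV k i}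

/-- `C₀` and `C₍n+1₎ = C₀ + Aₙ + Bₙ`. -/
noncomputable def Csub : ℕ → Submodule k (VecE k)
  | 0 => Czero k
  | n + 1 => Czero k ⊔ Asub k n ⊔ Bsub k n

/-- `D₀` and `D₍n+1₎ = D₀ + Aₙ + Bₙ`. -/
noncomputable def Dsub : ℕ → Submodule k (VecE k)
  | 0 => Dzero k
  | n + 1 => Dzero k ⊔ Asub k n ⊔ Bsub k n

/-! Every generator of `Cₙ` satisfies the linear conditions `x(aᵢ) = x(bᵢ) + x(bᵢ₊₁)` for `i ≥ n`,
and every generator of `Dₙ` the conditions `x(aᵢ) = x(bᵢ)` for `i ≥ n`. Subtracting, a vector of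
`Cₙ ∩ Dₙ` has `x(bⱼ) = 0`, hence `x(aⱼ) = 0`, for all `j > n`, and `x(aₙ) = x(bₙ)`; so it lies in
`span(a₀, b₀, …, aₙ₋₁, bₙ₋₁, aₙ + bₙ)`. The reverse inclusion is read off the generators. -/

@[simp] lemma aV_apply_inl (m j : ℕ) : aV k m (Sum.inl j) = if m = j then 1 else 0 := by
  simp [aV, Finsupp.single_apply]

@[simp] lemma aV_apply_inr (m j : ℕ) : aV k m (Sum.inr j) = 0 := by
  simp [aV]

@[simp] lemma bV_apply_inl (m j : ℕ) : bV k m (Sum.inl j) = 0 := by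
  simp [bV]

@[simp] lemma bV_apply_inr (m j : ℕ) : bV k m (Sum.inr j) = if m = j then 1 else 0 := by
  simp [bV, Finsupp.single_apply]

lemma aV_mem_Asub {i n : ℕ} (h : i ≤ n) : aV k i ∈ Asub k n :=
  Submodule.subset_span ⟨i, h, rfl⟩

lemma bV_mem_Bsub {i n : ℕ} (h : i ≤ n) : bV k i ∈ Bsub k n :=
  Submodule.subset_span ⟨i, h, rfl⟩

lemma Asub_sup_Bsub_le_Csub_succ (n : ℕ) : Asub k n ⊔ Bsub k n ≤ Csub k (n + 1) :=
  sup_le (le_sup_of_le_left le_sup_right) le_sup_right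

lemma Asub_sup_Bsub_le_Dsub_succ (n : ℕ) : Asub k n ⊔ Bsub k n ≤ Dsub k (n + 1) :=
  sup_le (le_sup_of_le_left le_sup_right) le_sup_right

def tailDiag (n : ℕ) : Submodule k (VecE k) where
  carrier := {x | ∀ i, n ≤ i → x (Sum.inl i) = x (Sum.inr i)}
  add_mem' ha hb i hi := by simp [ha i hi, hb i hi]
  zero_mem' _ _ := rfl
  smul_mem' c _ ha i hi := by simp [ha i hi]

def tailShift (n : ℕ) : Submodule k (VecE k) where
  carrier := {x | ∀ i, n ≤ i → x (Sum.inl i) = x (Sum.inr i) + x (Sum.inr (i + 1))}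
  add_mem' ha hb i hi := by simp [ha i hi, hb i hi]; ring
  zero_mem' _ _ := by simp
  smul_mem' c _ ha i hi := by simp [ha i hi]; ring

lemma Asub_le_tailDiag (n : ℕ) : Asub k n ≤ tailDiag k (n + 1) := by
  rw [Asub, Submodule.span_le]
  rintro _ ⟨i, hi, rfl⟩ j hj
  simp [show i ≠ j by omega]

lemma Bsub_le_tailDiag (n : ℕ) : Bsub k n ≤ tailDiag k (n + 1) := by
  rw [Bsub, Submodule.span_le]
  rintro _ ⟨i, hi, rfl⟩ j hj
  simp [show i ≠ j by omega]

lemma Dzero_le_tailDiag (n : ℕ) : Dzero k ≤ tailDiag k n := by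
  rw [Dzero, Submodule.span_le]
  rintro _ ⟨i, rfl⟩ j _
  simp

lemma Dsub_le_tailDiag : ∀ n, Dsub k n ≤ tailDiag k n
  | 0 => Dzero_le_tailDiag k 0
  | n + 1 => sup_le (sup_le (Dzero_le_tailDiag k _) (Asub_le_tailDiag k n)) (Bsub_le_tailDiag k n)

lemma Asub_le_tailShift (n : ℕ) : Asub k n ≤ tailShift k (n + 1) := by
  rw [Asub, Submodule.span_le]
  rintro _ ⟨i, hi, rfl⟩ j hj
  simp [show i ≠ j by omega]

lemma Bsub_le_tailShift (n : ℕ) : Bsub k n ≤ tailShift k (n + 1) := by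
  rw [Bsub, Submodule.span_le]
  rintro _ ⟨i, hi, rfl⟩ j hj
  simp [show i ≠ j by omega, show i ≠ j + 1 by omega]

lemma Czero_le_tailShift (n : ℕ) : Czero k ≤ tailShift k n := by
  rw [Czero, Submodule.span_le]
  rintro _ (rfl | ⟨i, rfl⟩) j _
  · simp
  · simp only [Finsupp.add_apply, aV_apply_inl, aV_apply_inr, bV_apply_inl, bV_apply_inr]
    split_ifs <;> first | omega | ring

lemma Csub_le_tailShift : ∀ n, Csub k n ≤ tailShift k n
  | 0 => Czero_le_tailShift k 0
  | n + 1 =>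
    sup_le (sup_le (Czero_le_tailShift k _) (Asub_le_tailShift k n)) (Bsub_le_tailShift k n)

lemma apply_eq_zero_of_mem_tailShift_inf_tailDiag {n : ℕ} {x : VecE k}
    (hx : x ∈ tailShift k n ⊓ tailDiag k n) {j : ℕ} (hj : n < j) :
    x (Sum.inl j) = 0 ∧ x (Sum.inr j) = 0 := by
  have hr : ∀ j, n < j → x (Sum.inr j) = 0 := by
    intro j hj
    obtain ⟨i, rfl⟩ : ∃ i, j = i + 1 := ⟨j - 1, by omega⟩
    linear_combination hx.2 i (by omega) - hx.1 i (by omega)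
  exact ⟨(hx.2 j hj.le).trans (hr j hj), hr j hj⟩

lemma mem_span_aV_bV_of_apply_eq_zero {n : ℕ} {x : VecE k}
    (h : ∀ j, n ≤ j → x (Sum.inl j) = 0 ∧ x (Sum.inr j) = 0) :
    x ∈ Submodule.span k ({v | ∃ i < n, v = aV k i} ∪ {v | ∃ i < n, v = bV k i}) := by
  have hx : x ∈ Finsupp.supported k k
      ({s | ∃ i < n, s = Sum.inl i} ∪ {s | ∃ i < n, s = Sum.inr i}) := by
    intro s hs
    rw [Finset.mem_coe, Finsupp.mem_support_iff] at hs
    rcases s with j | j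
    · exact Or.inl ⟨j, by_contra fun hj => hs (h j (by omega)).1, rfl⟩
    · exact Or.inr ⟨j, by_contra fun hj => hs (h j (by omega)).2, rfl⟩
  rw [Finsupp.supported_eq_span_single] at hx
  refine Submodule.span_mono ?_ hx
  rintro _ ⟨s, (⟨i, hi, rfl⟩ | ⟨i, hi, rfl⟩), rfl⟩
  exacts [Or.inl ⟨i, hi, rfl⟩, Or.inr ⟨i, hi, rfl⟩]

lemma Csub_inf_Dsub_le_span (n : ℕ) :
    Csub k n ⊓ Dsub k n ≤ Submodule.span k
      ({v | ∃ i < n, v = aV k i} ∪ {v | ∃ i < n, v = bV k i} ∪ {aV k n + bV k n}) := by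
  intro x hx
  have hK : x ∈ tailShift k n ⊓ tailDiag k n :=
    ⟨Csub_le_tailShift k n hx.1, Dsub_le_tailDiag k n hx.2⟩
  set c := x (Sum.inl n)
  have hlow : x - c • (aV k n + bV k n) ∈
      Submodule.span k ({v | ∃ i < n, v = aV k i} ∪ {v | ∃ i < n, v = bV k i}) := by
    refine mem_span_aV_bV_of_apply_eq_zero k fun j hj => ?_
    obtain rfl | hj := hj.eq_or_lt
    · have hdiag := hK.2 n le_rfl
      simp [c, hdiag]
    · simp [apply_eq_zero_of_mem_tailShift_inf_tailDiag k hK hj, hj.ne]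
  rw [← sub_add_cancel x (c • (aV k n + bV k n))]
  exact add_mem (Submodule.span_mono Set.subset_union_left hlow)
    (Submodule.smul_mem _ _ (Submodule.subset_span (Or.inr rfl)))

lemma Czero_le_Csub : ∀ n, Czero k ≤ Csub k n
  | 0 => le_rfl
  | _ + 1 => le_sup_left.trans le_sup_left

lemma Dzero_le_Dsub : ∀ n, Dzero k ≤ Dsub k n
  | 0 => le_rfl
  | _ + 1 => le_sup_left.trans le_sup_left

lemma aV_add_bV_mem_Csub : ∀ n, aV k n + bV k n ∈ Csub k n
  | 0 => Submodule.subset_span (Or.inl rfl)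
  | n + 1 => by
    have hC : aV k (n + 1) + bV k (n + 1) + aV k n ∈ Csub k (n + 1) :=
      Czero_le_Csub k _ (Submodule.subset_span (Or.inr ⟨n, rfl⟩))
    have hA : aV k n ∈ Csub k (n + 1) :=
      Asub_sup_Bsub_le_Csub_succ k n (Submodule.mem_sup_left (aV_mem_Asub k le_rfl))
    simpa using sub_mem hC hA

lemma aV_add_bV_mem_Dsub (n : ℕ) : aV k n + bV k n ∈ Dsub k n :=
  Dzero_le_Dsub k n (Submodule.subset_span ⟨n, rfl⟩)

lemma Asub_sup_Bsub_le_Csub_inf_Dsub_succ (n : ℕ) :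
    Asub k n ⊔ Bsub k n ≤ Csub k (n + 1) ⊓ Dsub k (n + 1) :=
  le_inf (Asub_sup_Bsub_le_Csub_succ k n) (Asub_sup_Bsub_le_Dsub_succ k n)

lemma span_le_Csub_inf_Dsub (n : ℕ) :
    Submodule.span k ({v | ∃ i < n, v = aV k i} ∪ {v | ∃ i < n, v = bV k i} ∪
      {aV k n + bV k n}) ≤ Csub k n ⊓ Dsub k n := by
  rw [Submodule.span_le]
  rintro v ((⟨i, hi, rfl⟩ | ⟨i, hi, rfl⟩) | rfl)
  · obtain ⟨m, rfl⟩ : ∃ m, n = m + 1 := ⟨n - 1, by omega⟩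
    exact Asub_sup_Bsub_le_Csub_inf_Dsub_succ k m
      (Submodule.mem_sup_left (aV_mem_Asub k (by omega)))
  · obtain ⟨m, rfl⟩ : ∃ m, n = m + 1 := ⟨n - 1, by omega⟩
    exact Asub_sup_Bsub_le_Csub_inf_Dsub_succ k m
      (Submodule.mem_sup_right (bV_mem_Bsub k (by omega)))
  · exact ⟨aV_add_bV_mem_Csub k n, aV_add_bV_mem_Dsub k n⟩

lemma span_le_Asub_sup_Bsub (n : ℕ) :
    Submodule.span k ({v | ∃ i < n, v = aV k i} ∪ {v | ∃ i < n, v = bV k i} ∪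
      {aV k n + bV k n}) ≤ Asub k n ⊔ Bsub k n := by
  rw [Submodule.span_le]
  rintro v ((⟨i, hi, rfl⟩ | ⟨i, hi, rfl⟩) | rfl)
  · exact Submodule.mem_sup_left (aV_mem_Asub k hi.le)
  · exact Submodule.mem_sup_right (bV_mem_Bsub k hi.le)
  · exact add_mem (Submodule.mem_sup_left (aV_mem_Asub k le_rfl))
      (Submodule.mem_sup_right (bV_mem_Bsub k le_rfl))

/-- `Cₙ ∩ Dₙ = span(a₀, b₀, …, a₍n₋₁₎, b₍n₋₁₎, aₙ + bₙ)`; consequently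
`Cₙ ∩ Dₙ ⊆ Aₙ + Bₙ ⊆ C₍n+1₎ ∩ D₍n+1₎`. -/
theorem Csub_inf_Dsub (n : ℕ) :
    Csub k n ⊓ Dsub k n =
      Submodule.span k
        ({v | ∃ i < n, v = aV k i} ∪ {v | ∃ i < n, v = bV k i} ∪ {aV k n + bV k n}) ∧
    Csub k n ⊓ Dsub k n ≤ Asub k n ⊔ Bsub k n ∧
    Asub k n ⊔ Bsub k n ≤ Csub k (n + 1) ⊓ Dsub k (n + 1) := by
  have heq := le_antisymm (Csub_inf_Dsub_le_span k n) (span_le_Csub_inf_Dsub k n)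
  exact ⟨heq, heq ▸ span_le_Asub_sup_Bsub k n, Asub_sup_Bsub_le_Csub_inf_Dsub_succ k n⟩
end

section
/- With E, Aₙ, Bₙ, C₀, D₀, Cₙ, Dₙ as above, let 𝐚₀, 𝐚₁, 𝐛₀, 𝐛₁ be the ideals of Sub E generated respectively by {Aₙ}, {Bₙ}, {Cₙ}, {Dₙ}. Then there do not exist subspaces X₀ ∈ 𝐚₀, X₁ ∈ 𝐚₁, Y₀ ∈ 𝐛₀, Y₁ ∈ 𝐛₁ with X₀ + X₁ = Y₀ ∩ Y₁, C₀ ⊆ Y₀, and D₀ ⊆ Y₁. (Hence D₄ is not ideal-projective with respect to relatively complemented modular lattices.) -/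
variable (k : Type*) [Field k]

theorem Submodule.eq_of_add_eq_add_of_disjoint {R M : Type*} [Ring R] [AddCommGroup M]
    [Module R M] {p q : Submodule R M} (hpq : Disjoint p q) {x u y w : M} (hx : x ∈ p)
    (hu : u ∈ p) (hy : y ∈ q) (hw : w ∈ q) (h : x + y = u + w) : x = u := by
  have hxu : x - u = w - y := by rw [sub_eq_sub_iff_add_eq_add, h, add_comm]
  rw [← sub_eq_zero]
  exact Submodule.disjoint_def.1 hpq _ (p.sub_mem hx hu) (hxu ▸ q.sub_mem hw hy)

variable {k}

open Finsupp

theorem Asub_le_supported (m : ℕ) : Asub k m ≤ supported k k (Sum.inl '' Set.Iic m) := by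
  rw [Asub, Submodule.span_le]
  rintro _ ⟨i, hi, rfl⟩
  exact single_mem_supported k 1 ⟨i, hi, rfl⟩

theorem Bsub_le_supported_range_inr (m : ℕ) : Bsub k m ≤ supported k k (Set.range Sum.inr) := by
  rw [Bsub, Submodule.span_le]
  rintro _ ⟨i, -, rfl⟩
  exact single_mem_supported k 1 ⟨i, rfl⟩

theorem aV_notMem_Asub {m n : ℕ} (hmn : m < n) : aV k n ∉ Asub k m := fun h => by
  have := (mem_supported' k _).1 (Asub_le_supported m h) (Sum.inl n) (by simpa using hmn)
  simp [aV] at this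

theorem aV_mem_of_add_bV_mem_sup {X₀ X₁ : Submodule k (VecE k)} {m₀ m₁ n : ℕ}
    (h₀ : X₀ ≤ Asub k m₀) (h₁ : X₁ ≤ Bsub k m₁) (h : aV k n + bV k n ∈ X₀ ⊔ X₁) :
    aV k n ∈ X₀ := by
  obtain ⟨x, hx, y, hy, hxy⟩ := Submodule.mem_sup.1 h
  have hdisj : Disjoint (supported k k (Set.range (@Sum.inl ℕ ℕ)))
      (supported k k (Set.range Sum.inr)) :=
    disjoint_supported_supported Set.isCompl_range_inl_range_inr.disjoint
  have hx' : x = aV k n :=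
    Submodule.eq_of_add_eq_add_of_disjoint hdisj
      (supported_mono (Set.image_subset_range _ _) (Asub_le_supported m₀ (h₀ hx)))
      (single_mem_supported k 1 ⟨n, rfl⟩) (Bsub_le_supported_range_inr m₁ (h₁ hy))
      (single_mem_supported k 1 ⟨n, rfl⟩) hxy
  exact hx' ▸ hx

theorem aV_zero_add_bV_zero_mem_Czero : aV k 0 + bV k 0 ∈ Czero k :=
  Submodule.subset_span (Set.mem_union_left _ rfl)

theorem aV_succ_add_bV_succ_add_aV_mem_Czero (n : ℕ) :
    aV k (n + 1) + bV k (n + 1) + aV k n ∈ Czero k :=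
  Submodule.subset_span (Set.mem_union_right _ ⟨n, rfl⟩)

theorem aV_add_bV_mem_Dzero (n : ℕ) : aV k n + bV k n ∈ Dzero k :=
  Submodule.subset_span ⟨n, rfl⟩

theorem aV_mem_of_sup_eq_inf {X₀ X₁ Y₀ Y₁ : Submodule k (VecE k)} {m₀ m₁ : ℕ}
    (h₀ : X₀ ≤ Asub k m₀) (h₁ : X₁ ≤ Bsub k m₁) (heq : X₀ ⊔ X₁ = Y₀ ⊓ Y₁)
    (hC : Czero k ≤ Y₀) (hD : Dzero k ≤ Y₁) (n : ℕ) : aV k n ∈ X₀ := by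
  have hX₀Y₀ : X₀ ≤ Y₀ := (le_sup_left.trans heq.le).trans inf_le_left
  have of_mem_Y₀ (n : ℕ) (h : aV k n + bV k n ∈ Y₀) : aV k n ∈ X₀ :=
    aV_mem_of_add_bV_mem_sup h₀ h₁ (heq ▸ Submodule.mem_inf.2 ⟨h, hD (aV_add_bV_mem_Dzero n)⟩)
  induction n with
  | zero => exact of_mem_Y₀ 0 (hC aV_zero_add_bV_zero_mem_Czero)
  | succ n ih =>
    refine of_mem_Y₀ (n + 1) ?_
    simpa using Y₀.sub_mem (hC (aV_succ_add_bV_succ_add_aV_mem_Czero n)) (hX₀Y₀ ih)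

variable (k) in
/-- With `𝐚₀, 𝐚₁, 𝐛₀, 𝐛₁` the ideals of `Sub E` generated by the chains
`{Aₙ}`, `{Bₙ}`, `{Cₙ}`, `{Dₙ}` respectively, there are no subspaces
`X₀ ∈ 𝐚₀`, `X₁ ∈ 𝐚₁`, `Y₀ ∈ 𝐛₀`, `Y₁ ∈ 𝐛₁` with `X₀ + X₁ = Y₀ ∩ Y₁`,
`C₀ ⊆ Y₀` and `D₀ ⊆ Y₁`. (Hence `D₄` is not ideal-projective with respect to
relatively complemented modular lattices.) -/
theorem no_ideal_projective_witness :
    ¬ ∃ X₀ X₁ Y₀ Y₁ : Submodule k (VecE k),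
        (∃ m, X₀ ≤ Asub k m) ∧ (∃ m, X₁ ≤ Bsub k m) ∧
        (∃ m, Y₀ ≤ Csub k m) ∧ (∃ m, Y₁ ≤ Dsub k m) ∧
        X₀ ⊔ X₁ = Y₀ ⊓ Y₁ ∧ Czero k ≤ Y₀ ∧ Dzero k ≤ Y₁ := by
  rintro ⟨X₀, X₁, Y₀, Y₁, ⟨m₀, h₀⟩, ⟨m₁, h₁⟩, -, -, heq, hC, hD⟩
  exact aV_notMem_Asub (Nat.lt_add_one m₀) (h₀ (aV_mem_of_sup_eq_inf h₀ h₁ heq hC hD (m₀ + 1)))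
end

section
/- The lattice D₄ (the six-element lattice obtained by gluing two squares, identifying the top of one with the bottom of the other) is projective with respect to the class of relatively complemented lattices: whenever K and L are relatively complemented lattices, h : L → K is a surjective lattice homomorphism, and a₀, a₁, b₀, b₁ ∈ K satisfy a₀ ∨ a₁ = b₀ ∧ b₁, there exist x₀, x₁, y₀, y₁ ∈ L with h(xᵢ) = aᵢ, h(yᵢ) = bᵢ, and x₀ ∨ x₁ = y₀ ∧ y₁. -/
/-- A lattice is relatively complemented if for all `a ≤ x ≤ b` there is `y`
with `x ⊓ y = a` and `x ⊔ y = b`. -/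
def RelativelyComplemented (M : Type*) [Lattice M] : Prop :=
  ∀ a x b : M, a ≤ x → x ≤ b → ∃ y : M, x ⊓ y = a ∧ x ⊔ y = b

/-- The lattice `D₄` is projective with respect to the class of relatively
complemented lattices: whenever `K`, `L` are relatively complemented,
`h : L → K` is a surjective lattice homomorphism, and
`a₀ ⊔ a₁ = b₀ ⊓ b₁` in `K`, there are `x₀, x₁, y₀, y₁ ∈ L` with `h xᵢ = aᵢ`,
`h yᵢ = bᵢ`, and `x₀ ⊔ x₁ = y₀ ⊓ y₁`. -/
theorem D4_projective_relatively_complemented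
    {K L : Type*} [Lattice K] [Lattice L]
    (hK : RelativelyComplemented K) (hL : RelativelyComplemented L)
    (h : LatticeHom L K) (hsurj : Function.Surjective h)
    (a₀ a₁ b₀ b₁ : K) (hab : a₀ ⊔ a₁ = b₀ ⊓ b₁) :
    ∃ x₀ x₁ y₀ y₁ : L,
      h x₀ = a₀ ∧ h x₁ = a₁ ∧ h y₀ = b₀ ∧ h y₁ = b₁ ∧ x₀ ⊔ x₁ = y₀ ⊓ y₁ := by
  obtain ⟨q₀, hq₀⟩ := hsurj a₀
  obtain ⟨q₁, hq₁⟩ := hsurj a₁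
  obtain ⟨p₀, hp₀⟩ := hsurj b₀
  obtain ⟨p₁, hp₁⟩ := hsurj b₁
  set m : K := a₀ ⊔ a₁ with hm
  set t : L := q₀ ⊔ q₁ with ht
  set z : L := t ⊔ (p₀ ⊓ p₁) with hz
  set s : L := (p₀ ⊔ z) ⊓ (p₁ ⊔ z) with hs
  have htz : t ≤ z := le_sup_left
  have hzs : z ≤ s := le_inf le_sup_right le_sup_right
  have hht : h t = m := by rw [ht, map_sup, hq₀, hq₁]
  have hhz : h z = m := by
    rw [hz, map_sup, map_inf, hht, hp₀, hp₁, ← hab]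
    exact sup_idem m
  -- complement of t in [q₁, z]
  obtain ⟨x₁, hx₁m, hx₁j⟩ := hL q₁ t z le_sup_right htz
  -- complement of s in [z, p₁ ⊔ z]
  obtain ⟨y₁, hy₁m, hy₁j⟩ := hL z s (p₁ ⊔ z) hzs inf_le_right
  have hq₁x₁ : q₁ ≤ x₁ := hx₁m ▸ inf_le_right
  have hzy₁ : z ≤ y₁ := hy₁m ▸ inf_le_right
  have hx₁z : x₁ ≤ z := hx₁j ▸ le_sup_right
  have hy₁p : y₁ ≤ p₁ ⊔ z := hy₁j ▸ le_sup_right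
  have hhx₁ : h x₁ = a₁ := by
    have h1 : h t ⊓ h x₁ = a₁ := by rw [← map_inf, hx₁m, hq₁]
    have h2 : h x₁ ≤ m := hhz ▸ OrderHomClass.mono h hx₁z
    rwa [hht, inf_eq_right.mpr h2] at h1
  have hhpz0 : h (p₀ ⊔ z) = b₀ := by
    rw [map_sup, hp₀, hhz, hab]; exact sup_eq_left.mpr inf_le_left
  have hhpz1 : h (p₁ ⊔ z) = b₁ := by
    rw [map_sup, hp₁, hhz, hab]; exact sup_eq_left.mpr inf_le_right
  have hhs : h s = m := by
    rw [hs, map_inf, hhpz0, hhpz1, ← hab]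
  have hhy₁ : h y₁ = b₁ := by
    have h2 : m ≤ h y₁ := hhz ▸ OrderHomClass.mono h hzy₁
    have h1 : h s ⊔ h y₁ = b₁ := by
      rw [← map_sup, hy₁j, hhpz1]
    rwa [hhs, sup_eq_right.mpr h2] at h1
  refine ⟨q₀, x₁, p₀ ⊔ z, y₁, hq₀, hhx₁, ?_, hhy₁, ?_⟩
  · exact hhpz0
  · have hjoin : q₀ ⊔ x₁ = z := by
      apply le_antisymm
      · exact sup_le ((le_sup_left.trans htz : q₀ ≤ z)) hx₁z
      · have : z = q₀ ⊔ x₁ := by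
          rw [← hx₁j, ht, sup_assoc, sup_eq_right.mpr hq₁x₁]
        exact this.le
    have hmeet : (p₀ ⊔ z) ⊓ y₁ = z := by
      apply le_antisymm
      · have : (p₀ ⊔ z) ⊓ y₁ ≤ s :=
          le_inf inf_le_left (inf_le_right.trans hy₁p)
        calc (p₀ ⊔ z) ⊓ y₁ ≤ s ⊓ y₁ := le_inf this inf_le_right
          _ = z := hy₁m
      · exact le_inf le_sup_right hzy₁
    rw [hjoin, hmeet]
end

section
/- Every partial lattice (in particular every lattice) P satisfying Whitman's Condition (W) is projective with respect to the class of lattices without infinite chains: if K and L are lattices with no infinite chains, h : L → K is a surjective lattice homomorphism, and f : P → K is a homomorphism of partial lattices, then there is a homomorphism g : P → L of partial lattices with f = h ∘ g. -/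
/-!
As `L` has no infinite chains, every fibre `h⁻¹ {x}` has a least element `β x`; this `β` is
the lower adjoint of `h`, so `β ∘ f` is a lift of `f` preserving order and all defined joins.
Such lifts are closed under pointwise joins, and since coordinates cannot increase forever there
is a pointwise greatest one, `g`. If `g` failed to preserve a defined meet `a = ⋀ X`, raising `g`
by `⋀ g[X]` on the up-set of `a` would give a strictly larger lift: Whitman's condition is
exactly what makes the raised map still preserve joins.
-/

/-- A partial lattice structure on a poset `P`: partial join and meet operations
on nonempty finite subsets, returning (when defined) a least upper bound,
resp. a greatest lower bound. -/
structure PartialLatticeStr (P : Type*) [PartialOrder P] where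
  pSup : Finset P → Option P
  pInf : Finset P → Option P
  pSup_empty : pSup ∅ = none
  pInf_empty : pInf ∅ = none
  pSup_spec : ∀ (X : Finset P) (a : P), pSup X = some a →
    ∀ c : P, (a ≤ c ↔ ∀ x ∈ X, x ≤ c)
  pInf_spec : ∀ (X : Finset P) (a : P), pInf X = some a →
    ∀ c : P, (c ≤ a ↔ ∀ x ∈ X, c ≤ x)

/-- A homomorphism of partial lattices from `(P, pl)` into a lattice `K`:
an isotone map preserving all defined joins and meets. -/
def IsPLHom {P K : Type*} [PartialOrder P] [Lattice K]
    (pl : PartialLatticeStr P) (f : P → K) : Prop :=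
  Monotone f ∧
  (∀ (X : Finset P) (hX : X.Nonempty) (a : P), pl.pSup X = some a →
    f a = X.sup' hX f) ∧
  (∀ (X : Finset P) (hX : X.Nonempty) (a : P), pl.pInf X = some a →
    f a = X.inf' hX f)

/-- Whitman's condition (W) for a partial lattice. -/
def WhitmanPL {P : Type*} [PartialOrder P] (pl : PartialLatticeStr P) : Prop :=
  ∀ (U V : Finset P) (a b : P), pl.pInf U = some a → pl.pSup V = some b →
    a ≤ b → (∃ u ∈ U, u ≤ b) ∨ (∃ v ∈ V, a ≤ v)

theorem wellFoundedLT_of_isChain_finite {α : Type*} [Preorder α]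
    (hα : ∀ s : Set α, IsChain (· ≤ ·) s → s.Finite) : WellFoundedLT α := by
  rw [WellFoundedLT, isWellFounded_iff, RelEmbedding.wellFounded_iff_isEmpty]
  refine ⟨fun e => ?_⟩
  have he : StrictAnti e := fun _ _ hmn => e.map_rel_iff.2 hmn
  exact Set.infinite_range_of_injective he.injective (hα _ he.antitone.isChain_range)

theorem wellFoundedGT_of_isChain_finite {α : Type*} [Preorder α]
    (hα : ∀ s : Set α, IsChain (· ≤ ·) s → s.Finite) : WellFoundedGT α :=
  wellFoundedLT_of_isChain_finite (α := αᵒᵈ) fun s hs => hα s hs.symm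

theorem SupClosed.exists_isGreatest {α : Type*} [SemilatticeSup α] [WellFoundedGT α]
    {s : Set α} (hs : SupClosed s) (hne : s.Nonempty) : ∃ a, IsGreatest s a := by
  obtain ⟨a, ha, hmax⟩ := wellFounded_gt.has_min s hne
  refine ⟨a, ha, fun b hb => ?_⟩
  have hab : a = a ⊔ b := le_sup_left.eq_of_not_lt (hmax _ (hs ha hb))
  exact hab ▸ le_sup_right

theorem InfClosed.exists_isLeast {α : Type*} [SemilatticeInf α] [WellFoundedLT α]
    {s : Set α} (hs : InfClosed s) (hne : s.Nonempty) : ∃ a, IsLeast s a :=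
  SupClosed.exists_isGreatest (α := αᵒᵈ) (s := OrderDual.ofDual ⁻¹' s) hs hne

theorem exists_galoisConnection_of_surjective {L K F : Type*} [SemilatticeInf L]
    [SemilatticeInf K] [WellFoundedLT L] [FunLike F L K] [InfHomClass F L K] (h : F)
    (hsurj : Function.Surjective h) :
    ∃ β : K → L, GaloisConnection β h ∧ ∀ x, h (β x) = x := by
  have hfibre : ∀ x : K, InfClosed (h ⁻¹' {x}) := fun x a ha b hb => by
    simp_all only [Set.mem_preimage, Set.mem_singleton_iff, map_inf, inf_idem]
  choose β hβ using fun x =>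
    (hfibre x).exists_isLeast (hsurj.nonempty_preimage.2 (Set.singleton_nonempty x))
  refine ⟨β, fun x y => ⟨fun hxy => ?_, fun hxy => ?_⟩, fun x => (hβ x).1⟩
  · exact (hβ x).1 ▸ OrderHomClass.mono h hxy
  · have : h (β x ⊓ y) = x := by rw [map_inf, (hβ x).1, inf_eq_left.2 hxy]
    exact ((hβ x).2 this).trans inf_le_right

theorem SupClosed.exists_eqOn_of_isGreatest {ι α : Type*} [SemilatticeSup α]
    {G : Set (ι → α)} (hG : SupClosed G) (hne : G.Nonempty) {γ : ι → α}
    (hγ : ∀ i, IsGreatest ((fun g => g i) '' G) (γ i)) (F : Finset ι) :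
    ∃ g ∈ G, Set.EqOn g γ F := by
  classical
  induction F using Finset.induction_on with
  | empty =>
    obtain ⟨g, hg⟩ := hne
    exact ⟨g, hg, by simp⟩
  | insert i F _ ih =>
    obtain ⟨g, hg, hgγ⟩ := ih
    obtain ⟨gi, hgi, hgiγ⟩ := (hγ i).1
    refine ⟨g ⊔ gi, hG hg hgi, fun j hj => ?_⟩
    rcases Finset.mem_insert.1 hj with rfl | hjF
    · simp only [Pi.sup_apply, hgiγ, sup_eq_right]
      exact (hγ j).2 ⟨g, hg, rfl⟩
    · simp only [Pi.sup_apply, hgγ hjF, sup_eq_left]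
      exact (hγ j).2 ⟨gi, hgi, rfl⟩

section BumpAbove

variable {P L : Type*} [Preorder P] [SemilatticeSup L] {g : P → L} {a p : P} {m : L}

open Classical in
noncomputable def bumpAbove (g : P → L) (a : P) (m : L) : P → L :=
  fun p => if a ≤ p then g p ⊔ m else g p

theorem bumpAbove_of_le (hp : a ≤ p) : bumpAbove g a m p = g p ⊔ m := if_pos hp

theorem bumpAbove_of_not_le (hp : ¬a ≤ p) : bumpAbove g a m p = g p := if_neg hp

theorem le_bumpAbove (g : P → L) (a : P) (m : L) : g ≤ bumpAbove g a m := fun p => by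
  by_cases hp : a ≤ p
  · exact le_sup_left.trans (bumpAbove_of_le hp).ge
  · exact (bumpAbove_of_not_le hp).ge

theorem Monotone.bumpAbove (hg : Monotone g) : Monotone (bumpAbove g a m) := by
  intro p q hpq
  by_cases hp : a ≤ p
  · rw [bumpAbove_of_le hp, bumpAbove_of_le (hp.trans hpq)]
    exact sup_le_sup_right (hg hpq) m
  · rw [bumpAbove_of_not_le hp]
    exact (hg hpq).trans (le_bumpAbove g a m q)

end BumpAbove

section Lifts

variable {P K L : Type*} [PartialOrder P] [Lattice K] [Lattice L]
  (pl : PartialLatticeStr P) (h : LatticeHom L K) (f : P → K)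

def supLifts : Set (P → L) :=
  {g | (∀ p, h (g p) = f p) ∧ Monotone g ∧
    ∀ (X : Finset P) (hX : X.Nonempty) (a : P), pl.pSup X = some a → g a = X.sup' hX g}

theorem supClosed_supLifts : SupClosed (supLifts pl h f) := by
  rintro g₁ ⟨hg₁, hm₁, hs₁⟩ g₂ ⟨hg₂, hm₂, hs₂⟩
  refine ⟨fun p => ?_, hm₁.sup hm₂, fun X hX a ha => ?_⟩
  · rw [Pi.sup_apply, map_sup, hg₁, hg₂, sup_idem]
  · rw [Pi.sup_apply, hs₁ X hX a ha, hs₂ X hX a ha]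
    refine eq_of_forall_ge_iff fun c => ?_
    simp only [sup_le_iff, Finset.sup'_le_iff, Pi.sup_apply, forall_and]

theorem exists_isGreatest_supLifts [WellFoundedGT L] (hne : (supLifts pl h f).Nonempty) :
    ∃ g, IsGreatest (supLifts pl h f) g := by
  have hG := supClosed_supLifts pl h f
  have hcoord : ∀ p, SupClosed ((fun g : P → L => g p) '' supLifts pl h f) := by
    rintro p _ ⟨g₁, hg₁, rfl⟩ _ ⟨g₂, hg₂, rfl⟩
    exact ⟨g₁ ⊔ g₂, hG hg₁ hg₂, rfl⟩
  choose γ hγ using fun p => (hcoord p).exists_isGreatest (hne.image _)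
  have agree := hG.exists_eqOn_of_isGreatest hne hγ
  refine ⟨γ, ⟨fun p => ?_, fun p q hpq => ?_, fun X hX a ha => ?_⟩,
    fun g hg p => (hγ p).2 ⟨g, hg, rfl⟩⟩
  · obtain ⟨g, hg, hgp⟩ := (hγ p).1
    exact hgp ▸ hg.1 p
  · classical
    obtain ⟨g, hg, hgγ⟩ := agree {p, q}
    rw [← hgγ (by simp), ← hgγ (by simp)]
    exact hg.2.1 hpq
  · classical
    obtain ⟨g, hg, hgγ⟩ := agree (insert a X)
    rw [← hgγ (Finset.mem_insert_self a X), hg.2.2 X hX a ha]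
    exact Finset.sup'_congr hX rfl fun x hx => hgγ (Finset.mem_insert_of_mem hx)

theorem comp_mem_supLifts {β : K → L} (gc : GaloisConnection β h) (hβ : ∀ x, h (β x) = x)
    (hf : IsPLHom pl f) : β ∘ f ∈ supLifts pl h f :=
  ⟨fun p => hβ (f p), gc.monotone_l.comp hf.1, fun X hX a ha => by
    rw [Function.comp_apply, hf.2.1 X hX a ha]
    exact Finset.apply_sup'_eq_sup'_comp hX β fun _ _ => gc.l_sup⟩

theorem bumpAbove_inf'_mem_supLifts (hW : WhitmanPL pl) (hf : Monotone f) {g : P → L}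
    (hg : g ∈ supLifts pl h f) {X : Finset P} (hX : X.Nonempty) {a : P}
    (ha : pl.pInf X = some a) (hm : h (X.inf' hX g) = f a) :
    bumpAbove g a (X.inf' hX g) ∈ supLifts pl h f := by
  obtain ⟨hgf, hgmono, hgsup⟩ := hg
  set m := X.inf' hX g
  refine ⟨fun p => ?_, hgmono.bumpAbove, fun Y hY b hb => ?_⟩
  · by_cases hap : a ≤ p
    · rw [bumpAbove_of_le hap, map_sup, hgf, hm, sup_eq_left.2 (hf hap)]
    · rw [bumpAbove_of_not_le hap, hgf]
  refine le_antisymm ?_ (Finset.sup'_le hY _ fun v hv =>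
    hgmono.bumpAbove ((pl.pSup_spec Y b hb b).1 le_rfl v hv))
  have hgb : g b ≤ Y.sup' hY (bumpAbove g a m) := (hgsup Y hY b hb).trans_le <|
    Finset.sup'_le hY _ fun v hv => (le_bumpAbove g a m v).trans (Finset.le_sup' _ hv)
  by_cases hab : a ≤ b
  · rw [bumpAbove_of_le hab]
    refine sup_le hgb ?_
    rcases hW X Y a b ha hb hab with ⟨u, hu, hub⟩ | ⟨v, hv, hav⟩
    · exact (Finset.inf'_le g hu).trans ((hgmono hub).trans hgb)
    · exact (le_sup_right.trans_eq (bumpAbove_of_le hav).symm).trans (Finset.le_sup' _ hv)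
  · rw [bumpAbove_of_not_le hab]
    exact hgb

theorem IsGreatest.isPLHom_of_supLifts (hW : WhitmanPL pl) (hf : IsPLHom pl f) {g : P → L}
    (hg : IsGreatest (supLifts pl h f) g) : IsPLHom pl g := by
  obtain ⟨hgf, hgmono, hgsup⟩ := hg.1
  refine ⟨hgmono, hgsup, fun X hX a ha => le_antisymm ?_ ?_⟩
  · exact Finset.le_inf' hX _ fun x hx => hgmono ((pl.pInf_spec X a ha a).1 le_rfl x hx)
  have hm : h (X.inf' hX g) = f a := by
    rw [map_finset_inf' h hX, hf.2.2 X hX a ha]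
    exact Finset.inf'_congr hX rfl fun x _ => hgf x
  have hle := hg.2 (bumpAbove_inf'_mem_supLifts pl h f hW hf.1 hg.1 hX ha hm) a
  rw [bumpAbove_of_le le_rfl] at hle
  exact le_sup_right.trans hle

end Lifts

theorem whitman_partial_lattice_projective_no_infinite_chains_general
    {P K L : Type*} [PartialOrder P] [Lattice K] [Lattice L]
    (pl : PartialLatticeStr P) (hW : WhitmanPL pl)
    (hLchain : ∀ s : Set L, IsChain (· ≤ ·) s → s.Finite)
    (h : LatticeHom L K) (hsurj : Function.Surjective h)
    (f : P → K) (hf : IsPLHom pl f) :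
    ∃ g : P → L, IsPLHom pl g ∧ f = h ∘ g := by
  have := wellFoundedLT_of_isChain_finite hLchain
  have := wellFoundedGT_of_isChain_finite hLchain
  obtain ⟨β, gc, hβ⟩ := exists_galoisConnection_of_surjective h hsurj
  obtain ⟨g, hg⟩ :=
    exists_isGreatest_supLifts pl h f ⟨β ∘ f, comp_mem_supLifts pl h f gc hβ hf⟩
  exact ⟨g, hg.isPLHom_of_supLifts pl h f hW hf, funext fun p => (hg.1.1 p).symm⟩

/-- Every partial lattice satisfying Whitman's condition (W) is projective with
respect to the class of lattices without infinite chains: if `K`, `L` have no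
infinite chains, `h : L → K` is a surjective lattice homomorphism and
`f : P → K` is a homomorphism of partial lattices, then `f = h ∘ g` for some
homomorphism `g : P → L` of partial lattices. -/
theorem whitman_partial_lattice_projective_no_infinite_chains
    {P K L : Type*} [PartialOrder P] [Lattice K] [Lattice L]
    (pl : PartialLatticeStr P) (hW : WhitmanPL pl)
    (hKchain : ∀ s : Set K, IsChain (· ≤ ·) s → s.Finite)
    (hLchain : ∀ s : Set L, IsChain (· ≤ ·) s → s.Finite)
    (h : LatticeHom L K) (hsurj : Function.Surjective h)
    (f : P → K) (hf : IsPLHom pl f) :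
    ∃ g : P → L, IsPLHom pl g ∧ f = h ∘ g :=
  whitman_partial_lattice_projective_no_infinite_chains_general pl hW hLchain h hsurj f hf
end

section
/- Let D be a finite distributive lattice with set of join-irreducibles P = {p₁,…,p_m}, and let M be a lattice with an independent (over o) family (b₁,…,b_m) of elements ≥ o such that M is modular. Then the map f : D → M defined by f(x) = ⋁{bᵢ : pᵢ ≤ x} (empty join = o) is a lattice homomorphism. -/
/-! Join-irreducibles of a distributive lattice are join-prime, so the index set of `x ⊔ y` is the
union and that of `x ⊓ y` the intersection of the index sets of `x` and `y`. Joins over `o` turn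
unions into joins outright; that they turn intersections into meets is where modularity and
independence enter: joins over disjoint index sets meet in `o`, and the modular law reduces the
general case to that one. -/

open Finset

section

variable {ι M : Type*} [Lattice M]

def joinOver (o : M) (b : ι → M) (s : Finset ι) : M :=
  s.fold (· ⊔ ·) o b

def IndepOver (o : M) (b : ι → M) : Prop :=
  ∀ (k : ι) (s : Finset ι), k ∉ s → b k ⊓ joinOver o b s = o

variable {o c : M} {b : ι → M} {s t : Finset ι}

theorem joinOver_le_iff : joinOver o b s ≤ c ↔ o ≤ c ∧ ∀ i ∈ s, b i ≤ c :=
  fold_op_rel_iff_and (r := fun x y => y ≤ x) sup_le_iff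

theorem le_joinOver : o ≤ joinOver o b s :=
  (joinOver_le_iff.1 le_rfl).1

theorem joinOver_mono (h : s ⊆ t) : joinOver o b s ≤ joinOver o b t :=
  joinOver_le_iff.2 ⟨le_joinOver, fun i hi => (joinOver_le_iff.1 le_rfl).2 i (h hi)⟩

variable [DecidableEq ι]

theorem joinOver_insert (k : ι) (s : Finset ι) :
    joinOver o b (insert k s) = b k ⊔ joinOver o b s :=
  fold_insert_idem

theorem joinOver_union : joinOver o b (s ∪ t) = joinOver o b s ⊔ joinOver o b t :=
  eq_of_forall_ge_iff fun c => by
    simp only [sup_le_iff, joinOver_le_iff, mem_union, or_imp, forall_and]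
    tauto

namespace IndepOver

variable [IsModularLattice M]

theorem joinOver_inf_eq_of_disjoint (hind : IndepOver o b) (hst : Disjoint s t) :
    joinOver o b s ⊓ joinOver o b t = o := by
  induction s using Finset.induction_on with
  | empty => exact inf_of_le_left le_joinOver
  | @insert k s hk ih =>
    obtain ⟨hkt, hst⟩ := disjoint_insert_left.1 hst
    set S := joinOver o b s
    set T := joinOver o b t
    -- modular law, then independence of `b k` from `s ∪ t`
    have hcut : (b k ⊔ S) ⊓ (S ⊔ T) = S := by
      rw [sup_comm (b k), sup_inf_assoc_of_le _ le_sup_left, ← joinOver_union,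
        hind k _ (by simp [hk, hkt]), sup_of_le_left le_joinOver]
    rw [joinOver_insert]
    refine le_antisymm ?_ (le_inf (le_joinOver.trans le_sup_right) le_joinOver)
    calc (b k ⊔ S) ⊓ T ≤ (b k ⊔ S) ⊓ (S ⊔ T) ⊓ T :=
          le_inf (inf_le_inf_left _ le_sup_right) inf_le_right
      _ = o := by rw [hcut, ih hst]

theorem joinOver_inf_joinOver (hind : IndepOver o b) (s t : Finset ι) :
    joinOver o b s ⊓ joinOver o b t = joinOver o b (s ∩ t) :=
  calc joinOver o b s ⊓ joinOver o b t
      = (joinOver o b (s ∩ t) ⊔ joinOver o b (s \ t)) ⊓ joinOver o b t := by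
        rw [← joinOver_union, union_comm, sdiff_union_inter]
    _ = joinOver o b (s ∩ t) ⊔ joinOver o b (s \ t) ⊓ joinOver o b t :=
        sup_inf_assoc_of_le _ (joinOver_mono inter_subset_right)
    _ = joinOver o b (s ∩ t) := by
        rw [hind.joinOver_inf_eq_of_disjoint sdiff_disjoint, sup_of_le_left le_joinOver]

end IndepOver

end

open Finset in
theorem join_of_independent_family_is_hom_general
    {D : Type*} [DistribLattice D] [Fintype D]
    [DecidablePred (SupIrred : D → Prop)]
    [DecidableRel ((· ≤ ·) : D → D → Prop)]
    {M : Type*} [Lattice M] [IsModularLattice M]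
    (o : M) (b : {p : D // SupIrred p} → M)
    -- independence of `(bᵢ)` over `o`:
    (hind : ∀ (k : {p : D // SupIrred p}) (S : Finset {p : D // SupIrred p}),
      k ∉ S → b k ⊓ S.fold ((· ⊔ ·) : M → M → M) o b = o) :
    ∀ x y : D,
      ((univ.filter fun p : {p : D // SupIrred p} => (p : D) ≤ x ⊔ y).fold ((· ⊔ ·) : M → M → M) o b =
        (univ.filter fun p : {p : D // SupIrred p} => (p : D) ≤ x).fold ((· ⊔ ·) : M → M → M) o b ⊔
        (univ.filter fun p : {p : D // SupIrred p} => (p : D) ≤ y).fold ((· ⊔ ·) : M → M → M) o b) ∧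
      ((univ.filter fun p : {p : D // SupIrred p} => (p : D) ≤ x ⊓ y).fold ((· ⊔ ·) : M → M → M) o b =
        (univ.filter fun p : {p : D // SupIrred p} => (p : D) ≤ x).fold ((· ⊔ ·) : M → M → M) o b ⊓
        (univ.filter fun p : {p : D // SupIrred p} => (p : D) ≤ y).fold ((· ⊔ ·) : M → M → M) o b) := by
  intro x y
  classical
  -- join-irreducibles of a distributive lattice are join-prime
  have hsup : (univ.filter fun p : {p : D // SupIrred p} => (p : D) ≤ x ⊔ y) =
      univ.filter (fun p : {p : D // SupIrred p} => (p : D) ≤ x) ∪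
        univ.filter (fun p : {p : D // SupIrred p} => (p : D) ≤ y) := by
    rw [← filter_or]
    exact filter_congr fun p _ => p.2.supPrime.le_sup
  have hinf : (univ.filter fun p : {p : D // SupIrred p} => (p : D) ≤ x ⊓ y) =
      univ.filter (fun p : {p : D // SupIrred p} => (p : D) ≤ x) ∩
        univ.filter (fun p : {p : D // SupIrred p} => (p : D) ≤ y) := by
    rw [← filter_and]
    exact filter_congr fun p _ => le_inf_iff
  rw [hsup, hinf]
  exact ⟨joinOver_union, (IndepOver.joinOver_inf_joinOver hind _ _).symm⟩

open Finset in
/-- Let `D` be a finite distributive lattice with join-irreducible elements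
`p₁, …, p_m`, and let `M` be a modular lattice with a family `(b₁, …, b_m)` of
elements `≥ o`, indexed by the join-irreducibles of `D`, which is independent
over `o`.  Then `f : D → M`, `f x = ⋁ {bᵢ : pᵢ ≤ x}` (empty join `= o`), is a
lattice homomorphism. -/
theorem join_of_independent_family_is_hom
    {D : Type*} [DistribLattice D] [Fintype D]
    [DecidablePred (SupIrred : D → Prop)]
    [DecidableRel ((· ≤ ·) : D → D → Prop)]
    {M : Type*} [Lattice M] [IsModularLattice M]
    (o : M) (b : {p : D // SupIrred p} → M)
    (hob : ∀ i, o ≤ b i)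
    -- independence of `(bᵢ)` over `o`:
    (hind : ∀ (k : {p : D // SupIrred p}) (S : Finset {p : D // SupIrred p}),
      k ∉ S → b k ⊓ S.fold ((· ⊔ ·) : M → M → M) o b = o) :
    ∀ x y : D,
      ((univ.filter fun p : {p : D // SupIrred p} => (p : D) ≤ x ⊔ y).fold ((· ⊔ ·) : M → M → M) o b =
        (univ.filter fun p : {p : D // SupIrred p} => (p : D) ≤ x).fold ((· ⊔ ·) : M → M → M) o b ⊔
        (univ.filter fun p : {p : D // SupIrred p} => (p : D) ≤ y).fold ((· ⊔ ·) : M → M → M) o b) ∧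
      ((univ.filter fun p : {p : D // SupIrred p} => (p : D) ≤ x ⊓ y).fold ((· ⊔ ·) : M → M → M) o b =
        (univ.filter fun p : {p : D // SupIrred p} => (p : D) ≤ x).fold ((· ⊔ ·) : M → M → M) o b ⊓
        (univ.filter fun p : {p : D // SupIrred p} => (p : D) ≤ y).fold ((· ⊔ ·) : M → M → M) o b) :=
  join_of_independent_family_is_hom_general o b hind
end
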